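/- arXiv:1401.7074 — 3 statements merged into one kernel-verified Lean document; each statement's English description precedes it below -/
import Mathlib

section
/- Let L ≥ 1, ρ > 0, h ∈ ℂ^L, and let a ∈ ℂ^L be nonzero. Define h' ∈ ℂ^L componentwise by h'_ℓ := |h_ℓ|·a_ℓ/|a_ℓ| if a_ℓ ≠ 0 and h'_ℓ := |h_ℓ| if a_ℓ = 0 (so h'_ℓ = h_ℓ e^{iφ_ℓ^{opt}} with the optimal phases φ_ℓ^{opt} = arg(a_ℓ) − arg(h_ℓ)). Then the phase precoded computation rate is at least the original computation rate: sup_{α ∈ ℂ} log⁺( ρ / (ρ‖α h' − a‖² + |α|²) ) ≥ sup_{α ∈ ℂ} log⁺( ρ / (ρ‖α h − a‖² + |α|²) ). -/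
/-!
Replacing `α` by `|α|` and rotating each `h_ℓ` onto the direction of `a_ℓ` turns
`|αh_ℓ - a_ℓ|` into `||αh_ℓ| - |a_ℓ||`, which is no larger by the reverse triangle inequality;
so every value of the original rate is dominated by a value of the precoded one. Comparing the
suprema needs the precoded rate to be bounded above, and it is: for every coordinate `ℓ`,
`ρ‖αg - a‖² + |α|² ≥ ρ|a_ℓ|² / (1 + ρ|g_ℓ|²)` by the triangle and Cauchy–Schwarz inequalities.
-/

open Complex Finset

/-- The effective-noise energy `Q(α) = ρ‖αh − a‖² + |α|²`. -/
noncomputable def effNoise {L : ℕ} (ρ : ℝ) (h a : Fin L → ℂ) (α : ℂ) : ℝ :=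
  ρ * ∑ ℓ, ‖α * h ℓ - a ℓ‖ ^ 2 + ‖α‖ ^ 2

lemma mul_norm_sq_le {R : Type*} [NonUnitalSeminormedRing R] {ρ : ℝ} (hρ : 0 ≤ ρ)
    (α g a : R) :
    ρ * ‖a‖ ^ 2 ≤ (1 + ρ * ‖g‖ ^ 2) * (ρ * ‖α * g - a‖ ^ 2 + ‖α‖ ^ 2) := by
  have htri : ‖a‖ ≤ ‖α‖ * ‖g‖ + ‖α * g - a‖ :=
    (norm_le_norm_add_norm_sub _ _).trans (by gcongr; exact norm_mul_le _ _)
  -- Cauchy–Schwarz for `(‖α‖, ‖αg − a‖)` against the weights `(1, ρ)`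
  have hcs : ρ * (‖α‖ * ‖g‖ + ‖α * g - a‖) ^ 2 ≤
      (1 + ρ * ‖g‖ ^ 2) * (ρ * ‖α * g - a‖ ^ 2 + ‖α‖ ^ 2) := by
    nlinarith [mul_nonneg hρ (sq_nonneg (‖α‖ - ρ * ‖g‖ * ‖α * g - a‖))]
  calc ρ * ‖a‖ ^ 2 ≤ ρ * (‖α‖ * ‖g‖ + ‖α * g - a‖) ^ 2 := by gcongr
    _ ≤ _ := hcs

lemma div_le_effNoise {L : ℕ} {ρ : ℝ} (hρ : 0 ≤ ρ) (g a : Fin L → ℂ) (α : ℂ) (ℓ : Fin L) :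
    ρ * ‖a ℓ‖ ^ 2 / (1 + ρ * ‖g ℓ‖ ^ 2) ≤ effNoise ρ g a α := by
  rw [div_le_iff₀' (by positivity)]
  refine (mul_norm_sq_le hρ α (g ℓ) (a ℓ)).trans ?_
  unfold effNoise
  gcongr
  exact single_le_sum (f := fun ℓ ↦ ‖α * g ℓ - a ℓ‖ ^ 2) (fun _ _ ↦ by positivity) (mem_univ ℓ)

lemma effNoise_pos {L : ℕ} {ρ : ℝ} (hρ : 0 < ρ) (g : Fin L → ℂ) {a : Fin L → ℂ} (ha : a ≠ 0)
    (α : ℂ) : 0 < effNoise ρ g a α := by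
  obtain ⟨ℓ, hℓ⟩ := Function.ne_iff.mp ha
  have : 0 < ‖a ℓ‖ := norm_pos_iff.mpr hℓ
  exact lt_of_lt_of_le (by positivity) (div_le_effNoise hρ.le g a α ℓ)

lemma max_log_div_antitone {ρ Q Q' : ℝ} (hρ : 0 < ρ) (hQ : 0 < Q) (hQQ' : Q ≤ Q') :
    max (Real.log (ρ / Q')) 0 ≤ max (Real.log (ρ / Q)) 0 := by
  have : 0 < Q' := hQ.trans_le hQQ'
  gcongr

noncomputable def compRate {L : ℕ} (ρ : ℝ) (g a : Fin L → ℂ) (α : ℂ) : ℝ :=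
  max (Real.log (ρ / effNoise ρ g a α)) 0

lemma bddAbove_range_compRate {L : ℕ} {ρ : ℝ} (hρ : 0 < ρ) (g : Fin L → ℂ) {a : Fin L → ℂ}
    (ha : a ≠ 0) : BddAbove (Set.range (compRate ρ g a)) := by
  obtain ⟨ℓ, hℓ⟩ := Function.ne_iff.mp ha
  have : 0 < ‖a ℓ‖ := norm_pos_iff.mpr hℓ
  refine ⟨max (Real.log (ρ / (ρ * ‖a ℓ‖ ^ 2 / (1 + ρ * ‖g ℓ‖ ^ 2)))) 0, ?_⟩
  rintro _ ⟨α, rfl⟩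
  exact max_log_div_antitone hρ (by positivity) (div_le_effNoise hρ.le g a α ℓ)

noncomputable def alignPhase (h a : ℂ) : ℂ :=
  if a = 0 then (‖h‖ : ℂ) else (‖h‖ : ℂ) * a / (‖a‖ : ℂ)

lemma norm_norm_mul_alignPhase_sub_le (α h a : ℂ) :
    ‖(‖α‖ : ℂ) * alignPhase h a - a‖ ≤ ‖α * h - a‖ := by
  unfold alignPhase
  split_ifs with ha
  · simp [ha]
  · have hna : (‖a‖ : ℂ) ≠ 0 := by exact_mod_cast norm_ne_zero_iff.mpr ha
    have : (‖α‖ : ℂ) * ((‖h‖ : ℂ) * a / (‖a‖ : ℂ)) - a =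
        ((‖α * h‖ - ‖a‖ : ℝ) : ℂ) * (a / ‖a‖) := by
      rw [norm_mul]
      field_simp
      push_cast
      ring
    rw [this, norm_mul, norm_real, norm_div, norm_real, norm_norm,
      div_self (norm_ne_zero_iff.mpr ha), mul_one]
    exact abs_norm_sub_norm_le _ _

lemma effNoise_alignPhase_le {L : ℕ} {ρ : ℝ} (hρ : 0 ≤ ρ) (h a : Fin L → ℂ) (α : ℂ) :
    effNoise ρ (fun ℓ ↦ alignPhase (h ℓ) (a ℓ)) a ‖α‖ ≤ effNoise ρ h a α := by
  unfold effNoise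
  rw [norm_real, norm_norm]
  gcongr with ℓ
  exact norm_norm_mul_alignPhase_sub_le α (h ℓ) (a ℓ)

theorem precoded_rate_ge_rate_general (L : ℕ) (ρ : ℝ) (hρ : 0 < ρ)
    (h a : Fin L → ℂ) (ha : a ≠ 0) (h' : Fin L → ℂ)
    (hh' : ∀ ℓ, h' ℓ = if a ℓ = 0 then ((‖h ℓ‖ : ℝ) : ℂ)
        else ((‖h ℓ‖ : ℝ) : ℂ) * a ℓ / ((‖a ℓ‖ : ℝ) : ℂ)) :
    (⨆ α : ℂ, max (Real.log (ρ / effNoise ρ h' a α)) 0) ≥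
      (⨆ α : ℂ, max (Real.log (ρ / effNoise ρ h a α)) 0) := by
  obtain rfl : h' = fun ℓ ↦ alignPhase (h ℓ) (a ℓ) := funext hh'
  change ⨆ α, compRate ρ h a α ≤ ⨆ α, compRate ρ _ a α
  refine ciSup_le fun α ↦ le_ciSup_of_le (bddAbove_range_compRate hρ _ ha) ‖α‖ ?_
  exact max_log_div_antitone hρ (effNoise_pos hρ _ ha _) (effNoise_alignPhase_le hρ.le h a α)

/-- with the optimally phase-precoded channel
`h'_ℓ = |h_ℓ| a_ℓ/|a_ℓ|` (and `h'_ℓ = |h_ℓ|` when `a_ℓ = 0`), the phase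
precoded computation rate is at least the original computation rate. -/
theorem precoded_rate_ge_rate (L : ℕ) (hL : 1 ≤ L) (ρ : ℝ) (hρ : 0 < ρ)
    (h a : Fin L → ℂ) (ha : a ≠ 0) (h' : Fin L → ℂ)
    (hh' : ∀ ℓ, h' ℓ = if a ℓ = 0 then ((‖h ℓ‖ : ℝ) : ℂ)
        else ((‖h ℓ‖ : ℝ) : ℂ) * a ℓ / ((‖a ℓ‖ : ℝ) : ℂ)) :
    (⨆ α : ℂ, max (Real.log (ρ / effNoise ρ h' a α)) 0) ≥
      (⨆ α : ℂ, max (Real.log (ρ / effNoise ρ h a α)) 0) :=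
  precoded_rate_ge_rate_general L ρ hρ h a ha h' hh'
end

section
/- Let L ≥ 1, ρ > 0, h ∈ ℂ^L, and let a ∈ ℤ[i]^L be a nonzero vector of Gaussian integers. Define h' ∈ ℂ^L by h'_ℓ := |h_ℓ|·a_ℓ/|a_ℓ| if a_ℓ ≠ 0 and h'_ℓ := |h_ℓ| otherwise. Then the phase precoded computation rate with optimal phases equals sup_{α ∈ ℂ} log⁺( ρ / (ρ‖α h' − a‖² + |α|²) ) = log⁺( (1 + ρ‖h‖²) / ( ‖a‖² + ρ( ‖h‖²‖a‖² − (Σ_{ℓ=1}^L |h_ℓ||a_ℓ|)² ) ) ). -/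
open Complex Finset GaussianInt

/-!
Aligning the phase of each `h'_ℓ` with that of `a_ℓ` makes `‖α h'_ℓ − a_ℓ‖ = ‖α |h_ℓ| − |a_ℓ|‖`,
so the effective noise is the real quadratic `(ρ‖h‖² + 1)|α|² − 2ρ S Re α + ρ‖a‖²`, where
`S = Σ |h_ℓ||a_ℓ|`. Its minimum `ρ(‖a‖² + ρ(‖h‖²‖a‖² − S²)) / (1 + ρ‖h‖²)` is attained at a
real `α` and is positive by Cauchy–Schwarz, and `x ↦ log⁺(ρ / x)` is antitone on `(0, ∞)`.
-/
lemma norm_mul_ofReal_sub_ofReal_sq (α : ℂ) (r t : ℝ) :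
    ‖α * r - t‖ ^ 2 = ‖α‖ ^ 2 * r ^ 2 - 2 * α.re * (r * t) + t ^ 2 := by
  simp only [Complex.sq_norm, Complex.normSq_apply, Complex.sub_re, Complex.mul_re,
    Complex.ofReal_re, Complex.ofReal_im, Complex.sub_im, Complex.mul_im]
  ring

lemma norm_mul_phaseAligned_sub (α z : ℂ) (r : ℝ) :
    ‖α * (if z = 0 then (r : ℂ) else r * z / (‖z‖ : ℂ)) - z‖ = ‖α * r - (‖z‖ : ℂ)‖ := by
  split_ifs with hz
  · simp [hz]
  · have hz' : (‖z‖ : ℂ) ≠ 0 := ofReal_ne_zero.mpr (norm_ne_zero_iff.mpr hz)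
    have hfactor : α * (r * z / (‖z‖ : ℂ)) - z = (α * r - (‖z‖ : ℂ)) * (z / (‖z‖ : ℂ)) := by
      field_simp
    have hunit : ‖z / (‖z‖ : ℂ)‖ = 1 := by
      rw [norm_div, norm_real, norm_norm, div_self (norm_ne_zero_iff.mpr hz)]
    rw [hfactor, norm_mul, hunit, mul_one]

lemma effNoise_ofReal {L : ℕ} (ρ : ℝ) (r t : Fin L → ℝ) (α : ℂ) :
    effNoise ρ (fun ℓ => (r ℓ : ℂ)) (fun ℓ => (t ℓ : ℂ)) α =
      (ρ * ∑ ℓ, r ℓ ^ 2 + 1) * ‖α‖ ^ 2 - 2 * (ρ * ∑ ℓ, r ℓ * t ℓ) * α.re +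
        ρ * ∑ ℓ, t ℓ ^ 2 := by
  simp only [effNoise, norm_mul_ofReal_sub_ofReal_sq, sum_add_distrib, sum_sub_distrib,
    ← mul_sum]
  ring

lemma isLeast_quadratic {c : ℝ} (hc : 0 < c) (b e : ℝ) :
    IsLeast (Set.range fun α : ℂ => c * ‖α‖ ^ 2 - 2 * b * α.re + e) (e - b ^ 2 / c) := by
  refine ⟨⟨(b / c : ℝ), ?_⟩, ?_⟩
  · simp only [norm_real, Real.norm_eq_abs, sq_abs, ofReal_re]
    field_simp
    ring
  · rintro _ ⟨α, rfl⟩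
    dsimp only
    have hnorm : ‖α‖ ^ 2 = α.re ^ 2 + α.im ^ 2 := by
      rw [Complex.sq_norm, Complex.normSq_apply]; ring
    have hsq : c * ‖α‖ ^ 2 - 2 * b * α.re + b ^ 2 / c =
        ((c * α.re - b) ^ 2 + (c * α.im) ^ 2) / c := by
      rw [hnorm]
      field_simp
      ring
    have : 0 ≤ ((c * α.re - b) ^ 2 + (c * α.im) ^ 2) / c := by positivity
    linarith

lemma ciSup_comp_eq_of_isLeast {ι : Type*} {f : ι → ℝ} {g : ℝ → ℝ} {m : ℝ}
    (hm : IsLeast (Set.range f) m) (hg : AntitoneOn g (Set.Ici m)) :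
    ⨆ i, g (f i) = g m := by
  obtain ⟨i₀, hi₀⟩ := hm.1
  have : Nonempty ι := ⟨i₀⟩
  have hle : ∀ i, g (f i) ≤ g m := fun i =>
    hg (Set.mem_Ici.mpr le_rfl) (hm.2 ⟨i, rfl⟩) (hm.2 ⟨i, rfl⟩)
  refine le_antisymm (ciSup_le hle) ?_
  rw [← hi₀]
  exact le_ciSup ⟨g m, by rintro _ ⟨i, rfl⟩; exact hle i⟩ i₀

lemma antitoneOn_max_log_div {ρ : ℝ} (hρ : 0 ≤ ρ) :
    AntitoneOn (fun x => max (Real.log (ρ / x)) 0) (Set.Ioi 0) := by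
  intro x hx y hy hxy
  rcases hρ.eq_or_lt with rfl | hρ
  · simp
  exact max_le_max_right 0
    (Real.log_le_log (div_pos hρ hy) (div_le_div_of_nonneg_left hρ.le hx hxy))

lemma sum_norm_sq_pos {ι E : Type*} [Fintype ι] [NormedAddCommGroup E] {v : ι → E}
    (hv : v ≠ 0) : 0 < ∑ i, ‖v i‖ ^ 2 := by
  obtain ⟨i, hi⟩ := Function.ne_iff.mp hv
  exact sum_pos' (fun j _ => by positivity) ⟨i, mem_univ i, pow_pos (norm_pos_iff.mpr hi) 2⟩

theorem precoded_rate_closed_form_general (L : ℕ) (ρ : ℝ) (hρ : 0 < ρ)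
    (h : Fin L → ℂ) (a : Fin L → GaussianInt) (ha : a ≠ 0) (h' : Fin L → ℂ)
    (hh' : ∀ ℓ, h' ℓ = if toComplex (a ℓ) = 0 then ((‖h ℓ‖ : ℝ) : ℂ)
        else ((‖h ℓ‖ : ℝ) : ℂ) * toComplex (a ℓ) / ((‖toComplex (a ℓ)‖ : ℝ) : ℂ)) :
    (⨆ α : ℂ, max (Real.log (ρ / effNoise ρ h' (fun ℓ => toComplex (a ℓ)) α)) 0) =
      max (Real.log ((1 + ρ * ∑ ℓ, ‖h ℓ‖ ^ 2) /
        ((∑ ℓ, ‖toComplex (a ℓ)‖ ^ 2) +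
          ρ * ((∑ ℓ, ‖h ℓ‖ ^ 2) * (∑ ℓ, ‖toComplex (a ℓ)‖ ^ 2) -
            (∑ ℓ, ‖h ℓ‖ * ‖toComplex (a ℓ)‖) ^ 2)))) 0 := by
  set H := ∑ ℓ, ‖h ℓ‖ ^ 2
  set A := ∑ ℓ, ‖toComplex (a ℓ)‖ ^ 2
  set S := ∑ ℓ, ‖h ℓ‖ * ‖toComplex (a ℓ)‖
  have hQ : effNoise ρ h' (fun ℓ => toComplex (a ℓ)) =
      fun α => (ρ * H + 1) * ‖α‖ ^ 2 - 2 * (ρ * S) * α.re + ρ * A := by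
    ext α
    rw [← effNoise_ofReal]
    simp only [effNoise, hh', norm_mul_phaseAligned_sub]
  have hA : 0 < A := sum_norm_sq_pos fun h0 =>
    ha (funext fun ℓ => toComplex_eq_zero.mp (congr_fun h0 ℓ))
  have hD : 0 < A + ρ * (H * A - S ^ 2) := by
    have hCS : S ^ 2 ≤ H * A := sum_mul_sq_le_sq_mul_sq _ _ _
    nlinarith
  have hc : 0 < ρ * H + 1 := by positivity
  have hmin : ρ * A - (ρ * S) ^ 2 / (ρ * H + 1) =
      ρ * (A + ρ * (H * A - S ^ 2)) / (ρ * H + 1) := by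
    field_simp
    ring
  have hmin_pos : 0 < ρ * A - (ρ * S) ^ 2 / (ρ * H + 1) := hmin ▸ by positivity
  rw [hQ, ciSup_comp_eq_of_isLeast (isLeast_quadratic hc _ _)
    ((antitoneOn_max_log_div hρ.le).mono (Set.Ici_subset_Ioi.mpr hmin_pos)), hmin]
  congr 2
  field_simp
  ring

/-- closed form for the phase precoded computation rate with the
optimal phases, for a nonzero vector of Gaussian integer coefficients. -/
theorem precoded_rate_closed_form (L : ℕ) (hL : 1 ≤ L) (ρ : ℝ) (hρ : 0 < ρ)
    (h : Fin L → ℂ) (a : Fin L → GaussianInt) (ha : a ≠ 0) (h' : Fin L → ℂ)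
    (hh' : ∀ ℓ, h' ℓ = if toComplex (a ℓ) = 0 then ((‖h ℓ‖ : ℝ) : ℂ)
        else ((‖h ℓ‖ : ℝ) : ℂ) * toComplex (a ℓ) / ((‖toComplex (a ℓ)‖ : ℝ) : ℂ)) :
    (⨆ α : ℂ, max (Real.log (ρ / effNoise ρ h' (fun ℓ => toComplex (a ℓ)) α)) 0) =
      max (Real.log ((1 + ρ * ∑ ℓ, ‖h ℓ‖ ^ 2) /
        ((∑ ℓ, ‖toComplex (a ℓ)‖ ^ 2) +
          ρ * ((∑ ℓ, ‖h ℓ‖ ^ 2) * (∑ ℓ, ‖toComplex (a ℓ)‖ ^ 2) -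
            (∑ ℓ, ‖h ℓ‖ * ‖toComplex (a ℓ)‖) ^ 2)))) 0 :=
  precoded_rate_closed_form_general L ρ hρ h a ha h' hh'
end

section
/- Let L ≥ 1, ρ > 0, h ∈ ℂ^L, and let a ∈ ℤ[i]^L be a nonzero vector of Gaussian integers. Then the computation rate satisfies sup_{α ∈ ℂ} log⁺( ρ / (ρ‖α h − a‖² + |α|²) ) = log⁺( (1 + ρ‖h‖²) / ( ‖a‖² + ρ( ‖h‖²‖a‖² − |⟨h,a⟩|² ) ) ). -/
open Complex Finset GaussianInt

open ComplexConjugate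

/-!
The effective noise `Q(α)` is a real quadratic in `α` with leading coefficient `A = 1 + ρ‖h‖²`.
Completing the square gives `A · Q(α) = ‖Aα − ρ·conj⟨h,a⟩‖² + ρ D` with
`D = ‖a‖² + ρ(‖h‖²‖a‖² − |⟨h,a⟩|²)`, so `Q` attains its minimum `ρD/A` at `α₀ = ρ·conj⟨h,a⟩/A`.
Cauchy–Schwarz and `a ≠ 0` give `D ≥ ‖a‖² > 0`, and since `log⁺(ρ / ·)` is antitone the supremum
of the rate is its value `log⁺(A/D)` at `α₀`.
-/

lemma norm_sum_mul_conj_sq_le {ι : Type*} (s : Finset ι) (h a : ι → ℂ) :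
    ‖∑ i ∈ s, h i * conj (a i)‖ ^ 2 ≤ (∑ i ∈ s, ‖h i‖ ^ 2) * ∑ i ∈ s, ‖a i‖ ^ 2 := by
  have hle : ‖∑ i ∈ s, h i * conj (a i)‖ ≤ ∑ i ∈ s, ‖h i‖ * ‖a i‖ :=
    (norm_sum_le _ _).trans_eq (by simp only [norm_mul, RCLike.norm_conj])
  calc ‖∑ i ∈ s, h i * conj (a i)‖ ^ 2 ≤ (∑ i ∈ s, ‖h i‖ * ‖a i‖) ^ 2 := by gcongr
    _ ≤ _ := sum_mul_sq_le_sq_mul_sq s _ _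

lemma norm_mul_sub_sq (α x y : ℂ) :
    ‖α * x - y‖ ^ 2 = ‖α‖ ^ 2 * ‖x‖ ^ 2 - 2 * (α * (x * conj y)).re + ‖y‖ ^ 2 := by
  simp only [Complex.sq_norm, normSq_sub, normSq_mul, mul_assoc]
  ring

lemma effNoise_eq {L : ℕ} (ρ : ℝ) (h a : Fin L → ℂ) (α : ℂ) :
    effNoise ρ h a α = (1 + ρ * ∑ ℓ, ‖h ℓ‖ ^ 2) * ‖α‖ ^ 2
      - 2 * ρ * (α * ∑ ℓ, h ℓ * conj (a ℓ)).re + ρ * ∑ ℓ, ‖a ℓ‖ ^ 2 := by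
  simp only [effNoise, norm_mul_sub_sq, sum_add_distrib, sum_sub_distrib, ← mul_sum]
  rw [mul_sum _ _ α, re_sum]
  ring

lemma mul_quadratic_eq_norm_sq_add (A ρ t : ℝ) (α c : ℂ) :
    A * (A * ‖α‖ ^ 2 - 2 * ρ * (α * c).re + ρ * t)
      = ‖A * α - ρ * conj c‖ ^ 2 + ρ * (A * t - ρ * ‖c‖ ^ 2) := by
  simp only [Complex.sq_norm, normSq_apply, sub_re, sub_im, mul_re, mul_im, ofReal_re, ofReal_im,
    conj_re, conj_im]
  ring

lemma isLeast_range_effNoise {L : ℕ} {ρ : ℝ} (hρ : 0 ≤ ρ) (h a : Fin L → ℂ) :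
    IsLeast (Set.range (effNoise ρ h a))
      (ρ * ((∑ ℓ, ‖a ℓ‖ ^ 2) + ρ * ((∑ ℓ, ‖h ℓ‖ ^ 2) * (∑ ℓ, ‖a ℓ‖ ^ 2)
          - ‖∑ ℓ, h ℓ * conj (a ℓ)‖ ^ 2)) / (1 + ρ * ∑ ℓ, ‖h ℓ‖ ^ 2)) := by
  set A := 1 + ρ * ∑ ℓ, ‖h ℓ‖ ^ 2
  set c := ∑ ℓ, h ℓ * conj (a ℓ)
  have hA : 0 < A := by positivity
  have key (α : ℂ) : A * effNoise ρ h a α = ‖A * α - ρ * conj c‖ ^ 2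
      + ρ * ((∑ ℓ, ‖a ℓ‖ ^ 2) + ρ * ((∑ ℓ, ‖h ℓ‖ ^ 2) * (∑ ℓ, ‖a ℓ‖ ^ 2) - ‖c‖ ^ 2)) := by
    rw [effNoise_eq, mul_quadratic_eq_norm_sq_add]
    ring
  refine ⟨⟨ρ * conj c / A, ?_⟩, ?_⟩
  · rw [eq_div_iff hA.ne', mul_comm, key, mul_div_cancel₀ _ (ofReal_ne_zero.mpr hA.ne'), sub_self,
      norm_zero]
    ring
  · rintro _ ⟨α, rfl⟩
    rw [div_le_iff₀ hA, mul_comm _ A, key]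
    exact le_add_of_nonneg_left (sq_nonneg _)

lemma iSup_max_log_div_eq {ι : Type*} {f : ι → ℝ} {m ρ : ℝ} (hf : IsLeast (Set.range f) m)
    (hm : 0 < m) (hρ : 0 < ρ) :
    ⨆ i, max (Real.log (ρ / f i)) 0 = max (Real.log (ρ / m)) 0 := by
  obtain ⟨⟨i₀, rfl⟩, hmin⟩ := hf
  have hle (i : ι) : max (Real.log (ρ / f i)) 0 ≤ max (Real.log (ρ / f i₀)) 0 := by
    have hfi : f i₀ ≤ f i := hmin ⟨i, rfl⟩
    gcongr
    · exact div_pos hρ (hm.trans_le hfi)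
  have : Nonempty ι := ⟨i₀⟩
  exact le_antisymm (ciSup_le hle) (le_ciSup ⟨_, Set.forall_mem_range.mpr hle⟩ i₀)

theorem rate_closed_form_general (L : ℕ) (ρ : ℝ) (hρ : 0 < ρ)
    (h : Fin L → ℂ) (a : Fin L → GaussianInt) (ha : a ≠ 0) :
    (⨆ α : ℂ, max (Real.log (ρ / effNoise ρ h (fun ℓ => toComplex (a ℓ)) α)) 0) =
      max (Real.log ((1 + ρ * ∑ ℓ, ‖h ℓ‖ ^ 2) /
        ((∑ ℓ, ‖toComplex (a ℓ)‖ ^ 2) +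
          ρ * ((∑ ℓ, ‖h ℓ‖ ^ 2) * (∑ ℓ, ‖toComplex (a ℓ)‖ ^ 2) -
            ‖∑ ℓ, h ℓ * (starRingEnd ℂ) (toComplex (a ℓ))‖ ^ 2)))) 0 := by
  have ha_pos : 0 < ∑ ℓ, ‖toComplex (a ℓ)‖ ^ 2 := by
    obtain ⟨ℓ₀, hℓ₀⟩ := Function.ne_iff.mp ha
    refine sum_pos' (fun _ _ => sq_nonneg _) ⟨ℓ₀, mem_univ _, ?_⟩
    have : toComplex (a ℓ₀) ≠ 0 := by simpa [GaussianInt.toComplex_eq_zero] using hℓ₀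
    positivity
  have hD : 0 < (∑ ℓ, ‖toComplex (a ℓ)‖ ^ 2) + ρ * ((∑ ℓ, ‖h ℓ‖ ^ 2) *
      (∑ ℓ, ‖toComplex (a ℓ)‖ ^ 2) - ‖∑ ℓ, h ℓ * conj (toComplex (a ℓ))‖ ^ 2) := by
    have := norm_sum_mul_conj_sq_le univ h (fun ℓ => toComplex (a ℓ))
    nlinarith
  rw [iSup_max_log_div_eq (isLeast_range_effNoise hρ.le h _) (by positivity) hρ]
  congr 2
  field_simp

/-- closed form for the computation rate of compute-and-forward
with channel vector `h` and nonzero Gaussian integer coefficient vector `a`. -/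
theorem rate_closed_form (L : ℕ) (hL : 1 ≤ L) (ρ : ℝ) (hρ : 0 < ρ)
    (h : Fin L → ℂ) (a : Fin L → GaussianInt) (ha : a ≠ 0) :
    (⨆ α : ℂ, max (Real.log (ρ / effNoise ρ h (fun ℓ => toComplex (a ℓ)) α)) 0) =
      max (Real.log ((1 + ρ * ∑ ℓ, ‖h ℓ‖ ^ 2) /
        ((∑ ℓ, ‖toComplex (a ℓ)‖ ^ 2) +
          ρ * ((∑ ℓ, ‖h ℓ‖ ^ 2) * (∑ ℓ, ‖toComplex (a ℓ)‖ ^ 2) -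
            ‖∑ ℓ, h ℓ * (starRingEnd ℂ) (toComplex (a ℓ))‖ ^ 2)))) 0 :=
  rate_closed_form_general L ρ hρ h a ha
end
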